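/- arXiv:2310.11841 — 4 statements merged into one kernel-verified Lean document; each statement's English description precedes it below -/
import Mathlib

section
/- Let m > ρ ≥ 2 and let α be an independent classification aggregation function satisfying generalized unanimity with permutation π (i.e., α(c,...,c) = π ∘ c for all classifications c). Then for every category p ∈ P and every object x ∈ X there exists an individual d ∈ N such that for every profile c ∈ 𝒞^N with c_d(x) = p, one has α(c)(x) = π(p). -/
/-!
Independence lets `α` act objectwise through a column rule `f x : (Fin n → P) → P`, and
generalized unanimity makes `f x` send the constant column `r` to `π r`. Fix a category `b`,
prescribe columns on a few objects and give all remaining objects one common classification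
avoiding `b` (there is room for this since `m > ρ`): surjectivity of the aggregate forces one of
the prescribed objects into `π b`. With two or three prescribed objects this says that, on the
columns in which a coalition `S` votes `q` and everybody else votes `p`, the coalitions for which
`q` wins do not depend on the object and form an ultrafilter on the finite set of individuals.
That ultrafilter is principal, and its generator is the required individual.
-/

/-- A classification: a surjective mapping from objects `X` to categories `P`. -/
abbrev Classif (X P : Type) : Type := {c : X → P // Function.Surjective c}

/-- A profile of classifications, one per individual in `Fin n`. -/
abbrev Profile (n : ℕ) (X P : Type) : Type := Fin n → Classif X P

/-- A CAF is independent if the aggregate category of an object only depends on the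
categories the individuals put that object in. -/
def Independent {n : ℕ} {X P : Type} (α : Profile n X P → Classif X P) : Prop :=
  ∀ (x : X) (c c' : Profile n X P),
    (∀ i, (c i).1 x = (c' i).1 x) → (α c).1 x = (α c').1 x

/-- A CAF is citizen sovereign if any object can be classified in any category. -/
def CitizenSovereign {n : ℕ} {X P : Type} (α : Profile n X P → Classif X P) : Prop :=
  ∀ (x : X) (p : P), ∃ c : Profile n X P, (α c).1 x = p

/-- A CAF is unanimous if it maps every constant profile `(c, …, c)` to `c`. -/
def Unanimous {n : ℕ} {X P : Type} (α : Profile n X P → Classif X P) : Prop :=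
  ∀ c : Classif X P, (α (fun _ => c)).1 = c.1

/-- A CAF satisfies generalized unanimity if there is a permutation `π` of `P` with
`α(c, …, c) = π ∘ c` for every classification `c`. -/
def GeneralizedUnanimity {n : ℕ} {X P : Type} (α : Profile n X P → Classif X P) : Prop :=
  ∃ π : Equiv.Perm P, ∀ c : Classif X P, (α (fun _ => c)).1 = π ∘ c.1

/-- A CAF is essentially a dictatorship if there are an individual `d` and a permutation
`π` of `P` such that `α(c) = π ∘ c_d` for every profile `c`. -/
def EssentiallyDictatorship {n : ℕ} {X P : Type} (α : Profile n X P → Classif X P) : Prop :=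
  ∃ (d : Fin n) (π : Equiv.Perm P), ∀ c : Profile n X P, (α c).1 = π ∘ (c d).1

/-- A CAF is a dictatorship if there is an individual `d` such that `α(c) = c_d`
for every profile `c`. -/
def Dictatorship {n : ℕ} {X P : Type} (α : Profile n X P → Classif X P) : Prop :=
  ∃ d : Fin n, ∀ c : Profile n X P, (α c).1 = (c d).1

open Function

theorem Finset.exists_mapsTo_and_subset_image {α β : Type*} (s : Finset α) (t : Finset β)
    {u : Set β} (hts : t.card ≤ s.card) (htu : ↑t ⊆ u) (hu : u.Nonempty) :
    ∃ σ : α → β, Set.MapsTo σ s u ∧ ↑t ⊆ σ '' s := by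
  obtain ⟨g⟩ := Function.Embedding.nonempty_of_card_le (α := t) (β := s) (by simpa using hts)
  obtain ⟨u₀, hu₀⟩ := hu
  have hinj : Injective fun r : t => (g r : α) := Subtype.val_injective.comp g.injective
  refine ⟨extend (fun r : t => (g r : α)) Subtype.val fun _ => u₀, fun a _ => ?_, ?_⟩
  · by_cases ha : ∃ r : t, (g r : α) = a
    · obtain ⟨r, rfl⟩ := ha
      rw [hinj.extend_apply]
      exact htu r.2
    · rwa [extend_apply' _ _ _ ha]
  · intro r hr
    exact ⟨g ⟨r, hr⟩, (g ⟨r, hr⟩).2, hinj.extend_apply _ _ ⟨r, hr⟩⟩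

theorem Finite.exists_forall_mem_iff_of_compl_notMem_iff {ι : Type*} [Finite ι]
    (𝒲 : Set (Set ι)) (huniv : Set.univ ∈ 𝒲) (hcompl : ∀ S, Sᶜ ∉ 𝒲 ↔ S ∈ 𝒲)
    (htriple : ∀ S ∈ 𝒲, ∀ T ∈ 𝒲, ∀ U ∈ 𝒲, S ∩ T ∩ U = ∅ → S ∪ T ∪ U = Set.univ → False) :
    ∃ d, ∀ S, S ∈ 𝒲 ↔ d ∈ S := by
  have hcompl_mem : ∀ S, S ∉ 𝒲 → Sᶜ ∈ 𝒲 := fun S hS => not_not.1 (mt (hcompl S).1 hS)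
  let F : Filter ι :=
    { sets := 𝒲
      univ_sets := huniv
      sets_of_superset := fun {S T} hS hST => by
        by_contra hT
        refine htriple S hS Tᶜ (hcompl_mem T hT) _ huniv ?_ (Set.union_univ _)
        rw [Set.inter_univ, ← Set.sdiff_eq]
        exact Set.sdiff_eq_empty.2 hST
      inter_sets := fun {S T} hS hT => by
        by_contra hST
        refine htriple S hS T hT _ (hcompl_mem _ hST) (Set.inter_compl_self _) ?_
        exact Set.eq_univ_of_forall fun i => by by_cases hi : i ∈ S <;> simp [hi] }
  obtain ⟨d, hd⟩ := (Ultrafilter.ofComplNotMemIff F hcompl).eq_pure_of_finite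
  exact ⟨d, fun S => (Ultrafilter.ext_iff.1 hd S).trans Ultrafilter.mem_pure⟩

def IsColumnwise {n : ℕ} {X P : Type} (α : Profile n X P → Classif X P)
    (f : X → (Fin n → P) → P) : Prop :=
  ∀ c x, (α c).1 x = f x fun i => (c i).1 x

theorem Independent.exists_isColumnwise {n : ℕ} {X P : Type} [Nonempty P]
    {α : Profile n X P → Classif X P} (hInd : Independent α) : ∃ f, IsColumnwise α f := by
  refine ⟨fun x => extend (fun c i => (c i).1 x) (fun c => (α c).1 x) (Classical.arbitrary _),
    fun c x => ?_⟩
  have hfac : FactorsThrough (fun c => (α c).1 x) (fun (c : Profile n X P) i => (c i).1 x) :=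
    fun c c' h => hInd x c c' (congrFun h)
  exact (hfac.extend_apply _ c).symm

theorem exists_classif_apply_eq {X P : Type} [Fintype X] [Fintype P]
    (h : Fintype.card P ≤ Fintype.card X) (x : X) (r : P) : ∃ c : Classif X P, c.1 x = r := by
  classical
  have : Nonempty P := ⟨r⟩
  obtain ⟨e⟩ := Function.Embedding.nonempty_of_card_le h
  have hsurj : Surjective (invFun e) := invFun_surjective e.injective
  exact ⟨⟨Equiv.swap (invFun e x) r ∘ invFun e, (Equiv.surjective _).comp hsurj⟩,
    Equiv.swap_apply_left _ _⟩

section Columnwise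

variable {n : ℕ} {X P : Type} [Fintype X] [Fintype P] {α : Profile n X P → Classif X P}
  {f : X → (Fin n → P) → P} {π : Equiv.Perm P}

theorem IsColumnwise.apply_const (hf : IsColumnwise α f)
    (hGU : ∀ c : Classif X P, (α fun _ => c).1 = π ∘ c.1)
    (hPX : Fintype.card P ≤ Fintype.card X) (x : X) (r : P) : f x (fun _ => r) = π r := by
  obtain ⟨c, hc⟩ := exists_classif_apply_eq hPX x r
  rw [← hc, ← comp_apply (f := π), ← hGU, hf]

variable [Nontrivial P]

theorem IsColumnwise.exists_mem_apply_eq [DecidableEq P] (hf : IsColumnwise α f)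
    (hconst : ∀ x r, f x (fun _ => r) = π r) (A : Finset X) (u : X → Fin n → P) {G : Finset P}
    (hcov : ∀ i, ∀ r ∈ G, ∃ a ∈ A, u a i = r) (hcard : Gᶜ.card + A.card ≤ Fintype.card X)
    {b : P} (hb : b ∈ G) : ∃ a ∈ A, f a (u a) = π b := by
  classical
  obtain ⟨σ, hσb, hσG⟩ := Aᶜ.exists_mapsTo_and_subset_image Gᶜ (u := {b}ᶜ)
    (by rw [Finset.card_compl A]; have := A.card_le_univ; omega) (by simpa using hb)
    (Set.nonempty_compl_of_nontrivial b)
  have hsurj : ∀ i, Surjective (A.piecewise (fun a => u a i) σ) := by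
    intro i r
    by_cases hr : r ∈ G
    · obtain ⟨a, ha, rfl⟩ := hcov i r hr
      exact ⟨a, A.piecewise_eq_of_mem _ _ ha⟩
    · obtain ⟨z, hz, rfl⟩ := hσG (by simpa using hr)
      exact ⟨z, A.piecewise_eq_of_notMem _ _ (by simpa using hz)⟩
  let c : Profile n X P := fun i => ⟨A.piecewise (fun a => u a i) σ, hsurj i⟩
  obtain ⟨a, ha⟩ := (α c).2 (π b)
  rw [hf] at ha
  by_cases haA : a ∈ A
  · refine ⟨a, haA, ?_⟩
    simpa [c, A.piecewise_eq_of_mem _ _ haA] using ha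
  · simp only [c, A.piecewise_eq_of_notMem _ _ haA, hconst, π.injective.eq_iff] at ha
    exact absurd ha (hσb (by simpa using haA))

theorem IsColumnwise.apply_eq_or_apply_eq (hf : IsColumnwise α f)
    (hconst : ∀ x r, f x (fun _ => r) = π r) (hPX : Fintype.card P < Fintype.card X)
    {x y : X} (hxy : x ≠ y) {u v : Fin n → P} {b : P} (huv : ∀ i, u i = b ∨ v i = b) :
    f x u = π b ∨ f y v = π b := by
  classical
  have hP := Fintype.one_lt_card (α := P)
  obtain ⟨a, ha, hab⟩ := hf.exists_mem_apply_eq hconst {x, y} (fun a => if a = x then u else v)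
    (G := {b}) (by simpa [hxy.symm] using huv)
    (by rw [Finset.card_compl, Finset.card_singleton, Finset.card_pair hxy]; omega)
    (Finset.mem_singleton_self b)
  simp only [Finset.mem_insert, Finset.mem_singleton] at ha
  rcases ha with rfl | rfl
  · exact Or.inl (by simpa using hab)
  · exact Or.inr (by simpa [hxy.symm] using hab)

theorem IsColumnwise.apply_eq_or_apply_eq_or_apply_eq (hf : IsColumnwise α f)
    (hconst : ∀ x r, f x (fun _ => r) = π r) (hPX : Fintype.card P < Fintype.card X)
    {x y z : X} (hxy : x ≠ y) (hxz : x ≠ z) (hyz : y ≠ z) {p q : P} (hpq : p ≠ q)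
    {u v w : Fin n → P} (hp : ∀ i, u i = p ∨ v i = p ∨ w i = p)
    (hq : ∀ i, u i = q ∨ v i = q ∨ w i = q) :
    f x u = π p ∨ f y v = π p ∨ f z w = π p := by
  classical
  obtain ⟨a, ha, hab⟩ := hf.exists_mem_apply_eq hconst {x, y, z}
    (fun a => if a = x then u else if a = y then v else w) (G := {p, q})
    (by simp [hxy.symm, hxz.symm, hyz.symm, hp, hq])
    (by
      have := Finset.card_le_three (a := x) (b := y) (c := z)
      have := Fintype.one_lt_card (α := P)
      rw [Finset.card_compl, Finset.card_pair hpq]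
      omega)
    (Finset.mem_insert_self p _)
  simp only [Finset.mem_insert, Finset.mem_singleton] at ha
  rcases ha with rfl | rfl | rfl
  · exact Or.inl (by simpa using hab)
  · exact Or.inr (Or.inl (by simpa [hxy.symm] using hab))
  · exact Or.inr (Or.inr (by simpa [hxz.symm, hyz.symm] using hab))

end Columnwise

open Classical in
noncomputable def splitVote {ι P : Type*} (p q : P) (S : Set ι) : ι → P :=
  fun i => if i ∈ S then q else p

section SplitVote

variable {ι P : Type*} {p q : P}

theorem splitVote_eq_left_iff (hpq : p ≠ q) {S : Set ι} {i : ι} :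
    splitVote p q S i = p ↔ i ∉ S := by
  by_cases hi : i ∈ S <;> simp [splitVote, hi, hpq.symm]

theorem splitVote_eq_right_iff (hpq : p ≠ q) {S : Set ι} {i : ι} :
    splitVote p q S i = q ↔ i ∈ S := by
  by_cases hi : i ∈ S <;> simp [splitVote, hi, hpq]

theorem splitVote_univ : splitVote p q (Set.univ : Set ι) = fun _ => q := by
  funext i
  simp [splitVote]

end SplitVote

theorem Fintype.exists_ne_ne {X : Type*} [Fintype X] (h : 3 ≤ Fintype.card X) (x y : X) :
    ∃ z, z ≠ x ∧ z ≠ y :=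
  Cardinal.exists_ne_ne_of_three_le (by rw [Cardinal.mk_fintype]; exact_mod_cast h) x y

section Dictator

variable {n : ℕ} {X P : Type} [Fintype X] [Fintype P] [Nontrivial P]
  {α : Profile n X P → Classif X P} {f : X → (Fin n → P) → P} {π : Equiv.Perm P} {p q : P}

theorem IsColumnwise.splitVote_eq_iff_compl_ne (hf : IsColumnwise α f)
    (hconst : ∀ x r, f x (fun _ => r) = π r) (hPX : Fintype.card P < Fintype.card X)
    (hpq : p ≠ q) {x y : X} (hxy : x ≠ y) (S : Set (Fin n)) :
    f x (splitVote p q S) = π q ↔ f y (splitVote p q Sᶜ) ≠ π q := by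
  constructor
  · intro hx hy
    have hcov : ∀ i, splitVote p q S i = p ∨ splitVote p q Sᶜ i = p := fun i => by
      simp only [splitVote_eq_left_iff hpq, Set.mem_compl_iff, not_not]
      exact (em' _)
    rcases hf.apply_eq_or_apply_eq hconst hPX hxy hcov with h | h
    · exact hpq (π.injective (h.symm.trans hx))
    · exact hpq (π.injective (h.symm.trans hy))
  · intro hy
    have hcov : ∀ i, splitVote p q S i = q ∨ splitVote p q Sᶜ i = q := fun i => by
      simp only [splitVote_eq_right_iff hpq, Set.mem_compl_iff]
      exact em _
    exact (hf.apply_eq_or_apply_eq hconst hPX hxy hcov).resolve_right hy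

theorem IsColumnwise.splitVote_eq_iff (hf : IsColumnwise α f)
    (hconst : ∀ x r, f x (fun _ => r) = π r) (hPX : Fintype.card P < Fintype.card X)
    (hpq : p ≠ q) (x y : X) (S : Set (Fin n)) :
    f x (splitVote p q S) = π q ↔ f y (splitVote p q S) = π q := by
  have := Fintype.one_lt_card (α := P)
  obtain ⟨z, hzx, hzy⟩ := Fintype.exists_ne_ne (by omega) x y
  rw [hf.splitVote_eq_iff_compl_ne hconst hPX hpq hzx.symm,
    hf.splitVote_eq_iff_compl_ne hconst hPX hpq hzy.symm]

theorem IsColumnwise.exists_dictator (hf : IsColumnwise α f)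
    (hconst : ∀ x r, f x (fun _ => r) = π r) (hPX : Fintype.card P < Fintype.card X)
    (hpq : p ≠ q) : ∃ d, ∀ x S, f x (splitVote p q S) = π q ↔ d ∈ S := by
  have := Fintype.one_lt_card (α := P)
  obtain ⟨x, y, z, hxy, hxz, hyz⟩ := Fintype.two_lt_card_iff.1 (by omega : 2 < Fintype.card X)
  have hmove := hf.splitVote_eq_iff hconst hPX hpq
  obtain ⟨d, hd⟩ := Finite.exists_forall_mem_iff_of_compl_notMem_iff
    {S | f x (splitVote p q S) = π q}
    (by simp [splitVote_univ, hconst])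
    (fun S => (hmove x y Sᶜ).not.trans (hf.splitVote_eq_iff_compl_ne hconst hPX hpq hxy S).symm)
    (fun S hS T hT U hU hinter hunion => by
      have hp : ∀ i, splitVote p q S i = p ∨ splitVote p q T i = p ∨ splitVote p q U i = p :=
        fun i => by
          simp only [splitVote_eq_left_iff hpq]
          have : i ∉ S ∩ T ∩ U := hinter ▸ Set.notMem_empty i
          simp only [Set.mem_inter_iff] at this
          tauto
      have hq : ∀ i, splitVote p q S i = q ∨ splitVote p q T i = q ∨ splitVote p q U i = q :=
        fun i => by
          simp only [splitVote_eq_right_iff hpq]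
          have : i ∈ S ∪ T ∪ U := hunion ▸ Set.mem_univ i
          simp only [Set.mem_union] at this
          tauto
      replace hT := (hmove x y T).1 hT
      replace hU := (hmove x z U).1 hU
      rcases hf.apply_eq_or_apply_eq_or_apply_eq hconst hPX hxy hxz hyz hpq hp hq with h | h | h
      · exact hpq (π.injective (h.symm.trans hS))
      · exact hpq (π.injective (h.symm.trans hT))
      · exact hpq (π.injective (h.symm.trans hU)))
  exact ⟨d, fun y S => (hmove y x S).trans (hd S)⟩

end Dictator

theorem claim_two_general
    {n ρ m : ℕ} (hρ : 2 ≤ ρ) (hm : ρ < m)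
    (X P : Type) [Fintype X] [Fintype P]
    (hX : Fintype.card X = m) (hP : Fintype.card P = ρ)
    (α : Profile n X P → Classif X P) (hInd : Independent α)
    (π : Equiv.Perm P) (hGU : ∀ c : Classif X P, (α (fun _ => c)).1 = π ∘ c.1) :
    ∀ (p : P) (x : X), ∃ d : Fin n,
      ∀ c : Profile n X P, (c d).1 x = p → (α c).1 x = π p := by
  intro p x
  have hPX : Fintype.card P < Fintype.card X := hP ▸ hX ▸ hm
  have : Nontrivial P := Fintype.one_lt_card_iff_nontrivial.1 (by omega)
  obtain ⟨q, hqp⟩ := exists_ne p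
  obtain ⟨f, hf⟩ := hInd.exists_isColumnwise
  have hconst := hf.apply_const hGU hPX.le
  obtain ⟨d, hd⟩ := hf.exists_dictator hconst hPX hqp.symm
  refine ⟨d, fun c hc => ?_⟩
  obtain ⟨y, hyx⟩ := Fintype.exists_ne_of_one_lt_card (by omega) x
  have hcov : ∀ i, (c i).1 x = p ∨ splitVote p q {i | (c i).1 x = p} i = p := fun i => by
    rw [splitVote_eq_left_iff hqp.symm]
    exact em _
  rw [hf]
  refine (hf.apply_eq_or_apply_eq hconst hPX hyx.symm hcov).resolve_right fun h => hqp ?_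
  exact π.injective (((hd y _).2 hc).symm.trans h)

/-- **Claim (2) of Lemma 2.** For an independent CAF satisfying generalized unanimity
with permutation `π`: for every category `p` and object `x` there is an individual `d`
such that whenever `c_d(x) = p`, one has `α(c)(x) = π p`. -/
theorem claim_two
    {n ρ m : ℕ} (hn : 2 ≤ n) (hρ : 2 ≤ ρ) (hm : ρ < m)
    (X P : Type) [Fintype X] [Fintype P]
    (hX : Fintype.card X = m) (hP : Fintype.card P = ρ)
    (α : Profile n X P → Classif X P) (hInd : Independent α)
    (π : Equiv.Perm P) (hGU : ∀ c : Classif X P, (α (fun _ => c)).1 = π ∘ c.1) :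
    ∀ (p : P) (x : X), ∃ d : Fin n,
      ∀ c : Profile n X P, (c d).1 x = p → (α c).1 x = π p :=
  claim_two_general hρ hm X P hX hP α hInd π hGU
end

section
/- Let m > ρ ≥ 2 and let α be an independent classification aggregation function satisfying generalized unanimity with permutation π (i.e., α(c,...,c) = π ∘ c for all classifications c). Then for every object x ∈ X there exists an individual d ∈ N such that α(c)(x) = π(c_d(x)) for every profile c ∈ 𝒞^N. -/
namespace ClaimThree
open Finset

variable {X P : Type} [Fintype X] [Fintype P] [DecidableEq X] [DecidableEq P]

lemma cover (W : Finset X) (T : Finset P) (c : P) (h : T.card ≤ W.card) :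
    ∃ g : X → P, (∀ w, g w = c ∨ g w ∈ T) ∧ (∀ t ∈ T, ∃ w ∈ W, g w = t) := by
  classical
  have : Fintype.card ↥T ≤ Fintype.card ↥W := by simpa [Fintype.card_coe] using h
  obtain ⟨φ⟩ := Function.Embedding.nonempty_of_card_le this
  refine ⟨fun w => if h : ∃ t : ↥T, ((φ t : ↥W) : X) = w then (Classical.choose h : ↥T) else c,
    ?_, ?_⟩
  · intro w
    by_cases h : ∃ t : ↥T, ((φ t : ↥W) : X) = w
    · right; simp only [h, dif_pos]; exact (Classical.choose h).2
    · left; simp [h]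
  · intro t ht
    refine ⟨(φ ⟨t, ht⟩ : ↥W), (φ ⟨t, ht⟩).2, ?_⟩
    have h : ∃ t' : ↥T, ((φ t' : ↥W) : X) = ((φ ⟨t, ht⟩ : ↥W) : X) := ⟨⟨t, ht⟩, rfl⟩
    simp only [h, dif_pos]
    have := Classical.choose_spec h
    have h2 : Classical.choose h = (⟨t, ht⟩ : ↥T) := φ.injective (Subtype.coe_injective this)
    rw [h2]

/-- two-valued profiles -/
def TwoVal {n : ℕ} (a b : P) (p : Fin n → P) : Prop := ∀ i, p i = a ∨ p i = b

/-- the swap of a two-valued profile -/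
def sw {n : ℕ} (a b : P) (p : Fin n → P) : Fin n → P := fun i => if p i = a then b else a

lemma twoVal_symm {n : ℕ} {a b : P} {p : Fin n → P} (h : TwoVal a b p) : TwoVal b a p :=
  fun i => (h i).symm

lemma twoVal_sw {n : ℕ} (a b : P) (p : Fin n → P) : TwoVal a b (sw a b p) := by
  intro i
  by_cases h : p i = a <;> simp [sw, h]

lemma sw_sw {n : ℕ} {a b : P} (hab : a ≠ b) {p : Fin n → P} (hp : TwoVal a b p) :
    sw a b (sw a b p) = p := by
  funext i
  rcases hp i with h | h <;> simp [sw, h, hab, Ne.symm hab]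

lemma card_aux1 {a b : P} (hab : a ≠ b) (c : P) {x y : X} (hxy : x ≠ y)
    (hPX : Fintype.card P < Fintype.card X) :
    (insert c ({a, b}ᶜ : Finset P)).card ≤ ({x, y}ᶜ : Finset X).card := by
  have h1 : (insert c ({a, b}ᶜ : Finset P)).card ≤ ({a, b}ᶜ : Finset P).card + 1 :=
    Finset.card_insert_le _ _
  have h2 : ({a, b}ᶜ : Finset P).card = Fintype.card P - 2 := by
    rw [Finset.card_compl, Finset.card_pair hab]
  have h3 : ({x, y}ᶜ : Finset X).card = Fintype.card X - 2 := by
    rw [Finset.card_compl, Finset.card_pair hxy]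
  have h4 : 2 ≤ Fintype.card P := by
    have : ({a, b} : Finset P).card = 2 := Finset.card_pair hab
    calc 2 = ({a, b} : Finset P).card := this.symm
    _ ≤ Fintype.card P := Finset.card_le_univ _ |>.trans (le_of_eq (Finset.card_univ))
  omega

lemma c1 {n : ℕ} (f : X → (Fin n → P) → P)
    (H1 : ∀ x v, f x (fun _ => v) = v)
    (H2 : ∀ M : X → Fin n → P, (∀ i, Function.Surjective fun w => M w i) →
      Function.Surjective fun w => f w (M w))
    (hPX : Fintype.card P < Fintype.card X)
    {x y : X} (hxy : x ≠ y) {a b : P} (hab : a ≠ b) (p : Fin n → P) (hp : TwoVal a b p) :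
    (f x p = a ∨ f x p = b) ∧ f y (sw a b p) = if f x p = a then b else a := by
  classical
  obtain ⟨g, hg1, hg2⟩ := cover ({x, y}ᶜ : Finset X) (insert (f x p) ({a, b}ᶜ : Finset P))
    (f x p) (card_aux1 hab _ hxy hPX)
  set M : X → Fin n → P := fun w => if w = x then p else if w = y then sw a b p else (fun _ => g w)
    with hM
  have hMx : M x = p := by simp [hM]
  have hMy : M y = sw a b p := by simp [hM, Ne.symm hxy]
  have hMw : ∀ w, w ≠ x → w ≠ y → M w = fun _ => g w := by
    intro w h1 h2; simp [hM, h1, h2]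
  have hcol : ∀ i, Function.Surjective fun w => M w i := by
    intro i v
    by_cases hva : v = a
    · subst hva
      rcases hp i with h | h
      · exact ⟨x, by show M x i = _; rw [hMx, h]⟩
      · refine ⟨y, ?_⟩
        show M y i = _
        rw [hMy]
        simp [sw, h, Ne.symm hab]
    · by_cases hvb : v = b
      · subst hvb
        rcases hp i with h | h
        · refine ⟨y, ?_⟩
          show M y i = _
          rw [hMy]
          simp [sw, h]
        · exact ⟨x, by show M x i = _; rw [hMx, h]⟩
      · have hvT : v ∈ insert (f x p) ({a, b}ᶜ : Finset P) :=
          Finset.mem_insert_of_mem (by simp [hva, hvb])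
        obtain ⟨w, hwW, hwg⟩ := hg2 v hvT
        rw [Finset.mem_compl, Finset.mem_insert, not_or, Finset.mem_singleton] at hwW
        exact ⟨w, by show M w i = _; rw [hMw w hwW.1 hwW.2]; exact hwg⟩
  have hout := H2 M hcol
  have key : ∀ v : P, v = a ∨ v = b → v = f x p ∨ v = f y (sw a b p) := by
    intro v hv
    obtain ⟨w, hw0⟩ := hout v
    have hw : f w (M w) = v := hw0
    by_cases hwx : w = x
    · subst hwx; rw [hMx] at hw; exact Or.inl hw.symm
    · by_cases hwy : w = y
      · subst hwy; rw [hMy] at hw; exact Or.inr hw.symm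
      · rw [hMw w hwx hwy, H1] at hw
        rcases hg1 w with h | h
        · exact Or.inl (hw.symm.trans h)
        · rcases Finset.mem_insert.mp h with h' | h'
          · exact Or.inl (hw.symm.trans h')
          · exfalso
            rw [Finset.mem_compl, Finset.mem_insert, Finset.mem_singleton, hw] at h'
            rcases hv with h'' | h'' <;> simp [h''] at h'
  refine ⟨?_, ?_⟩
  · rcases key a (Or.inl rfl) with h | h
    · exact Or.inl h.symm
    · rcases key b (Or.inr rfl) with h' | h'
      · exact Or.inr h'.symm
      · exact absurd (h.trans h'.symm) hab
  · by_cases hca : f x p = a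
    · rw [if_pos hca]
      rcases key b (Or.inr rfl) with h' | h'
      · exact absurd (h'.trans hca) (Ne.symm hab)
      · exact h'.symm
    · rw [if_neg hca]
      rcases key a (Or.inl rfl) with h | h
      · exact absurd h.symm hca
      · exact h.symm

section Derived

/-- a third object exists -/
lemma third (hX3 : 3 ≤ Fintype.card X) (x y : X) : ∃ z : X, z ≠ x ∧ z ≠ y := by
  have h : ({x, y}ᶜ : Finset X).Nonempty := by
    rw [← Finset.card_pos, Finset.card_compl]
    have : ({x, y} : Finset X).card ≤ 2 := Finset.card_insert_le _ _ |>.trans (by simp)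
    omega
  obtain ⟨z, hz⟩ := h
  rw [Finset.mem_compl, Finset.mem_insert, Finset.mem_singleton] at hz
  push_neg at hz
  exact ⟨z, hz⟩


variable {n : ℕ} (f : X → (Fin n → P) → P)
    (H1 : ∀ x v, f x (fun _ => v) = v)
    (H2 : ∀ M : X → Fin n → P, (∀ i, Function.Surjective fun w => M w i) →
      Function.Surjective fun w => f w (M w))
    (hX3 : 3 ≤ Fintype.card X)
    (hPX : Fintype.card P < Fintype.card X)

include H1 H2 hX3 hPX

/-- membership: on two-valued profiles `f` is two-valued -/
lemma memtv {x : X} {a b : P} (hab : a ≠ b) (p : Fin n → P) (hp : TwoVal a b p) :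
    f x p = a ∨ f x p = b := by
  have : Nontrivial X := Fintype.one_lt_card_iff_nontrivial.mp (by omega)
  obtain ⟨y, hy⟩ := exists_ne x
  exact (c1 f H1 H2 hPX (Ne.symm hy) hab p hp).1

/-- equality of the local functions on two-valued profiles -/
lemma eq2 {a b : P} (hab : a ≠ b) (p : Fin n → P) (hp : TwoVal a b p) (x y : X) :
    f x p = f y p := by
  by_cases hxy : x = y
  · rw [hxy]
  · obtain ⟨z, hzx, hzy⟩ := third hX3 x y
    have h1 := (c1 f H1 H2 hPX (Ne.symm hzx) hab p hp).2
    have h2 := (c1 f H1 H2 hPX (Ne.symm hzy) hab p hp).2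
    rcases memtv f H1 H2 hX3 hPX hab p hp (x := x) with h | h <;>
      rcases memtv f H1 H2 hX3 hPX hab p hp (x := y) with h' | h' <;>
        rw [h, h'] <;> rw [h] at h1 <;> rw [h'] at h2 <;> simp_all

/-- self-duality -/
lemma selfdual {x : X} {a b : P} (hab : a ≠ b) (p : Fin n → P) (hp : TwoVal a b p) :
    f x (sw a b p) = if f x p = a then b else a := by
  obtain ⟨y, hyx, _⟩ := third hX3 x x
  have h1 := (c1 f H1 H2 hPX (Ne.symm hyx) hab p hp).2
  rw [← h1]
  exact eq2 f H1 H2 hX3 hPX hab _ (twoVal_sw a b p) x y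


omit H1 H2 hX3 hPX in
lemma card_aux2 {a b : P} (hab : a ≠ b) {x y z : X} (hxy : x ≠ y) (hxz : x ≠ z) (hyz : y ≠ z)
    (hPX : Fintype.card P < Fintype.card X) :
    ({a, b}ᶜ : Finset P).card ≤ ({x, y, z}ᶜ : Finset X).card := by
  have h2 : ({a, b}ᶜ : Finset P).card = Fintype.card P - 2 := by
    rw [Finset.card_compl, Finset.card_pair hab]
  have hxyz : ({x, y, z} : Finset X).card = 3 := by
    rw [Finset.card_insert_of_notMem (by simp [hxy, hxz]), Finset.card_pair hyz]
  have h3 : ({x, y, z}ᶜ : Finset X).card = Fintype.card X - 3 := by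
    rw [Finset.card_compl, hxyz]
  have h4 : 2 ≤ Fintype.card P := by
    have : ({a, b} : Finset P).card = 2 := Finset.card_pair hab
    calc 2 = ({a, b} : Finset P).card := this.symm
    _ ≤ Fintype.card P := (Finset.card_le_univ _).trans (le_of_eq Finset.card_univ)
  omega

/-- the triple construction -/
lemma c2 {a b : P} (hab : a ≠ b) {x y z : X} (hxy : x ≠ y) (hxz : x ≠ z) (hyz : y ≠ z)
    (p q r : Fin n → P) (hp : TwoVal a b p) (hq : TwoVal a b q) (hr : TwoVal a b r)
    (hcova : ∀ i, p i = a ∨ q i = a ∨ r i = a)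
    (hcovb : ∀ i, p i = b ∨ q i = b ∨ r i = b) :
    (a = f x p ∨ a = f y q ∨ a = f z r) ∧ (b = f x p ∨ b = f y q ∨ b = f z r) := by
  classical
  obtain ⟨g, hg1, hg2⟩ := cover ({x, y, z}ᶜ : Finset X) ({a, b}ᶜ : Finset P) a
    (card_aux2 hab hxy hxz hyz hPX)
  set M : X → Fin n → P := fun w =>
    if w = x then p else if w = y then q else if w = z then r else
      if g w = a then r else (fun _ => g w) with hM
  have hMx : M x = p := by simp [hM]
  have hMy : M y = q := by simp [hM, Ne.symm hxy]
  have hMz : M z = r := by simp [hM, Ne.symm hxz, Ne.symm hyz]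
  have hMw : ∀ w, w ≠ x → w ≠ y → w ≠ z →
      M w = if g w = a then r else (fun _ => g w) := by
    intro w h1 h2 h3; simp [hM, h1, h2, h3]
  have hcol : ∀ i, Function.Surjective fun w => M w i := by
    intro i v
    by_cases hva : v = a
    · subst hva
      rcases hcova i with h | h | h
      · exact ⟨x, by show M x i = _; rw [hMx, h]⟩
      · exact ⟨y, by show M y i = _; rw [hMy, h]⟩
      · exact ⟨z, by show M z i = _; rw [hMz, h]⟩
    · by_cases hvb : v = b
      · subst hvb
        rcases hcovb i with h | h | h
        · exact ⟨x, by show M x i = _; rw [hMx, h]⟩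
        · exact ⟨y, by show M y i = _; rw [hMy, h]⟩
        · exact ⟨z, by show M z i = _; rw [hMz, h]⟩
      · have hvT : v ∈ ({a, b}ᶜ : Finset P) := by simp [hva, hvb]
        obtain ⟨w, hwW, hwg⟩ := hg2 v hvT
        rw [Finset.mem_compl, Finset.mem_insert, Finset.mem_insert,
          Finset.mem_singleton] at hwW
        push_neg at hwW
        refine ⟨w, ?_⟩
        show M w i = v
        rw [hMw w hwW.1 hwW.2.1 hwW.2.2, if_neg (by rw [hwg]; exact hva)]
        exact hwg
  have hout := H2 M hcol
  have key : ∀ v : P, v = a ∨ v = b → v = f x p ∨ v = f y q ∨ v = f z r := by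
    intro v hv
    obtain ⟨w, hw0⟩ := hout v
    have hw : f w (M w) = v := hw0
    by_cases hwx : w = x
    · subst hwx; rw [hMx] at hw; exact Or.inl hw.symm
    · by_cases hwy : w = y
      · subst hwy; rw [hMy] at hw; exact Or.inr (Or.inl hw.symm)
      · by_cases hwz : w = z
        · subst hwz; rw [hMz] at hw; exact Or.inr (Or.inr hw.symm)
        · rw [hMw w hwx hwy hwz] at hw
          by_cases hga : g w = a
          · rw [if_pos hga] at hw
            have : f w r = f z r := eq2 f H1 H2 hX3 hPX hab r hr w z
            rw [this] at hw
            exact Or.inr (Or.inr hw.symm)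
          · rw [if_neg hga, H1] at hw
            rcases hg1 w with h | h
            · exact absurd h hga
            · exfalso
              rw [Finset.mem_compl, Finset.mem_insert, Finset.mem_singleton, hw] at h
              rcases hv with h'' | h'' <;> simp [h''] at h
  exact ⟨key a (Or.inl rfl), key b (Or.inr rfl)⟩

end Derived

section Derived2

variable {n : ℕ} (f : X → (Fin n → P) → P)
    (H1 : ∀ x v, f x (fun _ => v) = v)
    (H2 : ∀ M : X → Fin n → P, (∀ i, Function.Surjective fun w => M w i) →
      Function.Surjective fun w => f w (M w))
    (hX3 : 3 ≤ Fintype.card X)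
    (hPX : Fintype.card P < Fintype.card X)
    (hP2 : 2 ≤ Fintype.card P)

include H1 H2 hX3 hPX hP2

/-- the `P ∖ {a}` construction -/
lemma c3 {x y : X} (hxy : x ≠ y) (a : P) (p q : Fin n → P)
    (hcol : ∀ i, p i = a ∨ q i = a) : a = f x p ∨ a = f y q := by
  classical
  have hPnt : Nontrivial P := Fintype.one_lt_card_iff_nontrivial.mp (by omega)
  obtain ⟨b, hba⟩ := exists_ne a
  have hcard : ({a}ᶜ : Finset P).card ≤ ({x, y}ᶜ : Finset X).card := by
    rw [Finset.card_compl, Finset.card_singleton, Finset.card_compl, Finset.card_pair hxy]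
    omega
  obtain ⟨g, hg1, hg2⟩ := cover ({x, y}ᶜ : Finset X) ({a}ᶜ : Finset P) b hcard
  set M : X → Fin n → P := fun w =>
    if w = x then p else if w = y then q else (fun _ => g w) with hM
  have hMx : M x = p := by simp [hM]
  have hMy : M y = q := by simp [hM, Ne.symm hxy]
  have hMw : ∀ w, w ≠ x → w ≠ y → M w = fun _ => g w := by
    intro w h1 h2; simp [hM, h1, h2]
  have hcols : ∀ i, Function.Surjective fun w => M w i := by
    intro i v
    by_cases hva : v = a
    · subst hva
      rcases hcol i with h | h
      · exact ⟨x, by show M x i = _; rw [hMx, h]⟩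
      · exact ⟨y, by show M y i = _; rw [hMy, h]⟩
    · have hvT : v ∈ ({a}ᶜ : Finset P) := by simp [hva]
      obtain ⟨w, hwW, hwg⟩ := hg2 v hvT
      rw [Finset.mem_compl, Finset.mem_insert, Finset.mem_singleton] at hwW
      push_neg at hwW
      exact ⟨w, by show M w i = _; rw [hMw w hwW.1 hwW.2]; exact hwg⟩
  have hout := H2 M hcols
  obtain ⟨w, hw0⟩ := hout a
  have hw : f w (M w) = a := hw0
  by_cases hwx : w = x
  · subst hwx; rw [hMx] at hw; exact Or.inl hw.symm
  · by_cases hwy : w = y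
    · subst hwy; rw [hMy] at hw; exact Or.inr hw.symm
    · exfalso
      rw [hMw w hwx hwy, H1] at hw
      rcases hg1 w with h | h
      · exact hba (h.symm.trans hw)
      · rw [hw] at h; simp at h

end Derived2

/-- the characteristic two-valued profile of a coalition -/
def chi {n : ℕ} (a b : P) (S : Finset (Fin n)) : Fin n → P := fun i => if i ∈ S then a else b

lemma chi_twoVal {n : ℕ} (a b : P) (S : Finset (Fin n)) : TwoVal a b (chi a b S) := by
  intro i; by_cases h : i ∈ S <;> simp [chi, h]

lemma chi_compl {n : ℕ} {a b : P} (hab : a ≠ b) (S : Finset (Fin n)) :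
    chi a b Sᶜ = sw a b (chi a b S) := by
  funext i
  by_cases h : i ∈ S <;> simp [chi, sw, h, Ne.symm hab]

lemma chi_univ {n : ℕ} (a b : P) : chi a b (Finset.univ : Finset (Fin n)) = fun _ => a := by
  funext i; simp [chi]


lemma endgame {n : ℕ} (F : Finset (Fin n) → Prop)
    (hN : F Finset.univ)
    (hdual : ∀ S, F Sᶜ ↔ ¬ F S)
    (htriple : ∀ S T U, F S → F T → F U →
      ∃ i, ((i ∈ S ↔ i ∈ T) ∧ (i ∈ S ↔ i ∈ U))) :
    ∃ d, ∀ S, F S ↔ d ∈ S := by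
  classical
  have hpair : ∀ S T, F S → F T → ∃ i, i ∈ S ∧ i ∈ T := by
    intro S T hS hT
    obtain ⟨i, h1, h2⟩ := htriple S T Finset.univ hS hT hN
    have hi : i ∈ S := h2.mpr (Finset.mem_univ i)
    exact ⟨i, hi, h1.mp hi⟩
  -- a minimal-cardinality F-set
  have hne : (Finset.univ.filter (fun S => F S) : Finset (Finset (Fin n))).Nonempty :=
    ⟨Finset.univ, by simp [hN]⟩
  obtain ⟨A, hAmem, hAmin⟩ := Finset.exists_min_image _ Finset.card hne
  have hA : F A := (Finset.mem_filter.mp hAmem).2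
  have hAne : A ≠ ∅ := by
    intro h
    have : ¬ F ∅ := by
      have := (hdual Finset.univ).mp
      simp only [Finset.compl_univ] at this
      intro hFe
      have h2 := (hdual Finset.univ)
      rw [Finset.compl_univ] at h2
      exact (h2.mp hFe) hN
    exact this (h ▸ hA)
  rcases Nat.lt_or_ge A.card 2 with hc | hc
  · -- card = 1
    have h1 : A.card = 1 := by
      have : 0 < A.card := Finset.card_pos.mpr (Finset.nonempty_iff_ne_empty.mpr hAne)
      omega
    obtain ⟨d, hd⟩ := Finset.card_eq_one.mp h1
    refine ⟨d, fun S => ⟨?_, ?_⟩⟩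
    · intro hS
      obtain ⟨i, hiS, hiA⟩ := hpair S A hS hA
      rw [hd, Finset.mem_singleton] at hiA
      exact hiA ▸ hiS
    · intro hdS
      by_contra hnS
      have hSc : F Sᶜ := (hdual S).mpr hnS
      obtain ⟨i, hiS, hiA⟩ := hpair Sᶜ A hSc hA
      rw [hd, Finset.mem_singleton] at hiA
      subst hiA
      exact (Finset.mem_compl.mp hiS) hdS
  · -- card ≥ 2 : contradiction
    exfalso
    obtain ⟨a₁, ha₁, a₂, ha₂, hne12⟩ := Finset.one_lt_card.mp hc
    have herase : ∀ a ∈ A, F (A.erase a)ᶜ := by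
      intro a ha
      refine (hdual _).mpr ?_
      intro hFe
      have := hAmin (A.erase a) (Finset.mem_filter.mpr ⟨Finset.mem_univ _, hFe⟩)
      have hlt : (A.erase a).card < A.card := Finset.card_erase_lt_of_mem ha
      omega
    obtain ⟨i, h1, h2⟩ := htriple A (A.erase a₁)ᶜ (A.erase a₂)ᶜ hA (herase a₁ ha₁) (herase a₂ ha₂)
    by_cases hiA : i ∈ A
    · have e1 : i = a₁ := by
        have := h1.mp hiA
        rw [Finset.mem_compl, Finset.mem_erase] at this
        push_neg at this
        by_contra hne
        exact this hne hiA
      have e2 : i = a₂ := by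
        have := h2.mp hiA
        rw [Finset.mem_compl, Finset.mem_erase] at this
        push_neg at this
        by_contra hne
        exact this hne hiA
      exact hne12 (e1 ▸ e2)
    · have : i ∈ (A.erase a₁)ᶜ := by
        rw [Finset.mem_compl, Finset.mem_erase]
        intro h; exact hiA h.2
      exact hiA (h1.mpr this)


section Derived3

variable {n : ℕ} (f : X → (Fin n → P) → P)
    (H1 : ∀ x v, f x (fun _ => v) = v)
    (H2 : ∀ M : X → Fin n → P, (∀ i, Function.Surjective fun w => M w i) →
      Function.Surjective fun w => f w (M w))
    (hX3 : 3 ≤ Fintype.card X)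
    (hPX : Fintype.card P < Fintype.card X)
    (hP2 : 2 ≤ Fintype.card P)

/-- `d` is a dictator for the pair `{a, b}` -/
def DictP (a b : P) (d : Fin n) : Prop := ∀ (x : X) (p : Fin n → P), TwoVal a b p → f x p = p d

lemma dictP_symm {a b : P} {d : Fin n} (h : DictP f a b d) : DictP f b a d :=
  fun x p hp => h x p (twoVal_symm hp)

include H1 H2 hX3 hPX hP2

lemma pairdict {a b : P} (hab : a ≠ b) : ∃ d : Fin n, DictP f a b d := by
  classical
  have hXnt : Nonempty X := Fintype.card_pos_iff.mp (by omega)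
  obtain ⟨x₀⟩ := hXnt
  set F : Finset (Fin n) → Prop := fun S => f x₀ (chi a b S) = a with hF
  have hN : F Finset.univ := by rw [hF]; simp only [chi_univ]; exact H1 x₀ a
  have hdual : ∀ S, F Sᶜ ↔ ¬ F S := by
    intro S
    rw [hF]
    simp only
    rw [chi_compl hab, selfdual f H1 H2 hX3 hPX hab _ (chi_twoVal a b S)]
    constructor
    · intro h hS
      rw [if_pos hS] at h
      exact hab h.symm
    · intro h
      rw [if_neg h]
  have htriple : ∀ S T U, F S → F T → F U →
      ∃ i, ((i ∈ S ↔ i ∈ T) ∧ (i ∈ S ↔ i ∈ U)) := by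
    intro S T U hS hT hU
    by_contra hcon
    push_neg at hcon
    have hcova : ∀ i, chi a b S i = a ∨ chi a b T i = a ∨ chi a b U i = a := by
      intro i
      by_cases h1 : i ∈ S
      · exact Or.inl (by simp [chi, h1])
      · by_cases h2 : i ∈ T
        · exact Or.inr (Or.inl (by simp [chi, h2]))
        · by_cases h3 : i ∈ U
          · exact Or.inr (Or.inr (by simp [chi, h3]))
          · rcases (hcon i) (iff_of_false h1 h2) with ⟨hS', _⟩ | ⟨_, hU'⟩
            exacts [(h1 hS').elim, (h3 hU').elim]
    have hcovb : ∀ i, chi a b S i = b ∨ chi a b T i = b ∨ chi a b U i = b := by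
      intro i
      by_cases h1 : i ∈ S
      · by_cases h2 : i ∈ T
        · by_cases h3 : i ∈ U
          · rcases (hcon i) (iff_of_true h1 h2) with ⟨_, hU'⟩ | ⟨hS', _⟩
            exacts [(hU' h3).elim, (hS' h1).elim]
          · exact Or.inr (Or.inr (by simp [chi, h3]))
        · exact Or.inr (Or.inl (by simp [chi, h2]))
      · exact Or.inl (by simp [chi, h1])
    obtain ⟨y, hyx, _⟩ := third hX3 x₀ x₀
    obtain ⟨z, hzx, hzy⟩ := third hX3 x₀ y
    have hc2 := (c2 f H1 H2 hX3 hPX hab (Ne.symm hyx) (Ne.symm hzx) (Ne.symm hzy)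
      (chi a b S) (chi a b T) (chi a b U)
      (chi_twoVal a b S) (chi_twoVal a b T) (chi_twoVal a b U) hcova hcovb).2
    have eT : f y (chi a b T) = a := by
      rw [eq2 f H1 H2 hX3 hPX hab _ (chi_twoVal a b T) y x₀]; exact hT
    have eU : f z (chi a b U) = a := by
      rw [eq2 f H1 H2 hX3 hPX hab _ (chi_twoVal a b U) z x₀]; exact hU
    rcases hc2 with h | h | h
    · exact hab ((h.trans hS).symm)
    · exact hab ((h.trans eT).symm)
    · exact hab ((h.trans eU).symm)
  obtain ⟨d, hd⟩ := endgame F hN hdual htriple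
  refine ⟨d, fun x p hp => ?_⟩
  classical
  set S : Finset (Fin n) := Finset.univ.filter (fun i => p i = a) with hSdef
  have hchi : chi a b S = p := by
    funext i
    rcases hp i with h | h
    · simp [chi, hSdef, h]
    · have hpia : p i ≠ a := by rw [h]; exact Ne.symm hab
      have hns : i ∉ S := by simp [hSdef, hpia]
      simp [chi, hns, h]
  have hxx : f x p = f x₀ p := eq2 f H1 H2 hX3 hPX hab p hp x x₀
  by_cases hpd : p d = a
  · have hdS : d ∈ S := by simp [hSdef, hpd]
    have : F S := (hd S).mpr hdS
    rw [hF] at this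
    calc f x p = f x₀ (chi a b S) := by rw [hxx, hchi]
    _ = a := this
    _ = p d := hpd.symm
  · have hdS : d ∉ S := by simp [hSdef, hpd]
    have hnF : ¬ F S := fun h => hdS ((hd S).mp h)
    rw [hF] at hnF
    simp only [hchi] at hnF
    have hpb : p d = b := (hp d).resolve_left hpd
    rcases memtv f H1 H2 hX3 hPX hab p hp (x := x₀) with h | h
    · exact absurd h hnF
    · rw [hxx, h, hpb]

lemma uniqdict {a b : P} (hab : a ≠ b) {d e : Fin n}
    (hd : DictP f a b d) (he : DictP f a b e) : d = e := by
  classical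
  have hXnt : Nonempty X := Fintype.card_pos_iff.mp (by omega)
  obtain ⟨x₀⟩ := hXnt
  by_contra hde
  set p : Fin n → P := fun i => if i = d then a else b with hp
  have htv : TwoVal a b p := by intro i; by_cases h : i = d <;> simp [hp, h]
  have h1 : f x₀ p = a := by rw [hd x₀ p htv]; simp [hp]
  have h2 : f x₀ p = b := by rw [he x₀ p htv]; simp [hp, Ne.symm hde]
  exact hab (h1.symm.trans h2)

lemma cross' {a b c : P} (hab : a ≠ b) (hac : a ≠ c) {d e : Fin n}
    (hd : DictP f a b d) (he : DictP f a c e) : d = e := by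
  classical
  by_cases hbc : b = c
  · subst hbc; exact uniqdict f H1 H2 hX3 hPX hP2 hab hd he
  · by_contra hde
    have hXnt : Nonempty X := Fintype.card_pos_iff.mp (by omega)
    obtain ⟨x₀⟩ := hXnt
    obtain ⟨y, hyx, _⟩ := third hX3 x₀ x₀
    set p : Fin n → P := fun i => if i = d then b else a with hpdef
    set q : Fin n → P := fun i => if i = e then c else a with hqdef
    have htp : TwoVal a b p := by intro i; by_cases h : i = d <;> simp [hpdef, h]
    have htq : TwoVal a c q := by intro i; by_cases h : i = e <;> simp [hqdef, h]
    have hcol : ∀ i, p i = a ∨ q i = a := by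
      intro i
      by_cases h : i = d
      · subst h; right; simp [hqdef, fun h => hde h]
      · left; simp [hpdef, h]
    rcases c3 f H1 H2 hX3 hPX hP2 (Ne.symm hyx) a p q hcol with h | h
    · rw [hd x₀ p htp] at h; simp [hpdef] at h; exact hab h
    · rw [he y q htq] at h; simp [hqdef] at h; exact hac h

lemma allEq {a b a' b' : P} (hab : a ≠ b) (hab' : a' ≠ b') {d d' : Fin n}
    (h : DictP f a b d) (h' : DictP f a' b' d') : d = d' := by
  by_cases h1 : a = a'
  · subst h1; exact cross' f H1 H2 hX3 hPX hP2 hab hab' h h'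
  · by_cases h2 : a = b'
    · subst h2
      exact cross' f H1 H2 hX3 hPX hP2 hab (Ne.symm (fun h => h1 h.symm))
        h (dictP_symm f h')
    · by_cases h3 : b = a'
      · subst h3
        exact cross' f H1 H2 hX3 hPX hP2 (Ne.symm hab) hab' (dictP_symm f h) h'
      · by_cases h4 : b = b'
        · subst h4
          exact cross' f H1 H2 hX3 hPX hP2 (Ne.symm hab) h3 (dictP_symm f h) (dictP_symm f h')
        · obtain ⟨e, he⟩ := pairdict f H1 H2 hX3 hPX hP2 (show a ≠ b' from h2)
          have e1 : d = e := cross' f H1 H2 hX3 hPX hP2 hab h2 h he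
          have e2 : e = d' := cross' f H1 H2 hX3 hPX hP2 (Ne.symm h2)
            (Ne.symm hab') (dictP_symm f he) (dictP_symm f h')
          exact e1.trans e2

/-- the abstract core theorem -/
theorem core : ∀ x : X, ∃ d : Fin n, ∀ p : Fin n → P, f x p = p d := by
  classical
  have hPnt : Nontrivial P := Fintype.one_lt_card_iff_nontrivial.mp (by omega)
  obtain ⟨a₀, b₀, hab₀⟩ := exists_pair_ne P
  obtain ⟨d, hd⟩ := pairdict f H1 H2 hX3 hPX hP2 hab₀
  intro x
  refine ⟨d, fun p => ?_⟩
  obtain ⟨b, hba⟩ := exists_ne (p d)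
  obtain ⟨d', hd'⟩ := pairdict f H1 H2 hX3 hPX hP2 (Ne.symm hba)
  have hdd : d' = d := allEq f H1 H2 hX3 hPX hP2 (Ne.symm hba) hab₀ hd' hd
  rw [hdd] at hd'
  set q : Fin n → P := fun i => if p i = p d then b else p d with hqdef
  have htq : TwoVal (p d) b q := by
    intro i; by_cases h : p i = p d <;> simp [hqdef, h]
  have hcol : ∀ i, p i = p d ∨ q i = p d := by
    intro i
    by_cases h : p i = p d
    · exact Or.inl h
    · right; simp [hqdef, h]
  obtain ⟨y, hyx, _⟩ := third hX3 x x
  rcases c3 f H1 H2 hX3 hPX hP2 (Ne.symm hyx) (p d) p q hcol with h | h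
  · exact h.symm
  · exfalso
    rw [hd' y q htq] at h
    simp [hqdef] at h
    exact hba h.symm

end Derived3

end ClaimThree

/-- **Claim (3) of Lemma 2.** For an independent CAF satisfying generalized unanimity
with permutation `π`: for every object `x` there is an individual `d` such that
`α(c)(x) = π (c_d(x))` for every profile `c`. -/
theorem claim_three
    {n ρ m : ℕ} (hn : 2 ≤ n) (hρ : 2 ≤ ρ) (hm : ρ < m)
    (X P : Type) [Fintype X] [Fintype P]
    (hX : Fintype.card X = m) (hP : Fintype.card P = ρ)
    (α : Profile n X P → Classif X P) (hInd : Independent α)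
    (π : Equiv.Perm P) (hGU : ∀ c : Classif X P, (α (fun _ => c)).1 = π ∘ c.1) :
    ∀ x : X, ∃ d : Fin n,
      ∀ c : Profile n X P, (α c).1 x = π ((c d).1 x) := by
  classical
  letI : DecidableEq X := Classical.decEq X
  letI : DecidableEq P := Classical.decEq P
  have hPX : Fintype.card P < Fintype.card X := by rw [hX, hP]; exact hm
  have hX3 : 3 ≤ Fintype.card X := by rw [hX]; omega
  have hP2 : 2 ≤ Fintype.card P := by rw [hP]; exact hρ
  have i₀ : Fin n := ⟨0, by omega⟩
  have hcanon : ∀ (x : X) (p : Fin n → P), ∃ c : Profile n X P, ∀ i, (c i).1 x = p i := by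
    intro x p
    have hcard : (Finset.univ : Finset P).card ≤ ({x}ᶜ : Finset X).card := by
      rw [Finset.card_univ, Finset.card_compl, Finset.card_singleton]
      omega
    obtain ⟨g, _, hg2⟩ := ClaimThree.cover ({x}ᶜ : Finset X) (Finset.univ : Finset P)
      (p i₀) hcard
    refine ⟨fun i => ⟨fun w => if w = x then p i else g w, ?_⟩, fun i => by simp⟩
    intro v
    obtain ⟨w, hwW, hwg⟩ := hg2 v (Finset.mem_univ v)
    rw [Finset.mem_compl, Finset.mem_singleton] at hwW
    exact ⟨w, by show (if w = x then p i else g w) = v; rw [if_neg hwW]; exact hwg⟩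
  choose canon hcanonv using hcanon
  set f : X → (Fin n → P) → P := fun x p => π.symm ((α (canon x p)).1 x) with hf
  have key : ∀ (c : Profile n X P) (x : X), (α c).1 x = π (f x (fun i => (c i).1 x)) := by
    intro c x
    have h := hInd x c (canon x (fun i => (c i).1 x)) (fun i => (hcanonv x (fun j => (c j).1 x) i).symm)
    rw [h, hf]
    simp
  have H1 : ∀ (x : X) (v : P), f x (fun _ => v) = v := by
    intro x v
    set c0 : Classif X P := canon x (fun _ => v) i₀ with hc0
    have hc0x : c0.1 x = v := hcanonv x (fun _ => v) i₀
    have h0 : (α (fun _ => c0)).1 x = π v := by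
      rw [hGU c0]
      simp [hc0x]
    have h1 : (α (fun _ => c0)).1 x = π (f x (fun _ => c0.1 x)) := key _ x
    rw [h0] at h1
    have h2 : (fun _ : Fin n => c0.1 x) = (fun _ : Fin n => v) := by
      funext i; rw [hc0x]
    rw [h2] at h1
    exact (π.injective h1).symm
  have H2 : ∀ M : X → Fin n → P, (∀ i, Function.Surjective fun w => M w i) →
      Function.Surjective fun w => f w (M w) := by
    intro M hM
    set cM : Profile n X P := fun i => ⟨fun w => M w i, hM i⟩ with hcM
    have hval : (fun w => f w (M w)) = fun w => π.symm ((α cM).1 w) := by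
      funext w
      have h := key cM w
      have h2 : (fun i => (cM i).1 w) = M w := rfl
      rw [h2] at h
      rw [h]
      simp
    rw [hval]
    exact π.symm.surjective.comp (α cM).2
  intro x
  obtain ⟨d, hd⟩ := ClaimThree.core f H1 H2 hX3 hPX hP2 x
  refine ⟨d, fun c => ?_⟩
  rw [key c x, hd]
end

section
/- Let m > ρ ≥ 2, let P = {p_1,...,p_ρ}, X = {x_1,...,x_m}, and let α be a citizen sovereign and independent classification aggregation function. Define π : P → P by letting π(p_i), for each i ∈ {1,...,ρ}, be the common value α(c)(x_i) over all profiles c ∈ 𝒞^N with c_j(x_i) = p_i for every j ∈ N (well-defined by independence, nonempty since m > ρ). Then π is a bijection of P, and moreover α(c)(x) = π(p) for every p ∈ P, every x ∈ X, and every profile c ∈ 𝒞^N with c_j(x) = p for all j ∈ N. -/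
/-- **Core of Lemma 1.** Enumerate `P = {p_1, …, p_ρ}` and `X = {x_1, …, x_m}` with
`m > ρ ≥ 2`, and let `α` be a citizen sovereign and independent CAF. Let `π : P → P`
be such that `π (p_i) = α(c)(x_i)` for every profile `c` that unanimously puts `x_i`
in `p_i` (for each `i ∈ {1, …, ρ}`). Then `π` is a bijection of `P` and moreover
`α(c)(x) = π p` for every `p ∈ P`, `x ∈ X` and every profile `c` that unanimously puts
`x` in `p`. -/
theorem pi_bijective_and_unanimity_value
    {n ρ m : ℕ} (hn : 2 ≤ n) (hρ : 2 ≤ ρ) (hm : ρ < m)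
    (X P : Type) [Fintype X] [Fintype P]
    (hX : Fintype.card X = m) (hP : Fintype.card P = ρ)
    (pcat : Fin ρ → P) (hpcat : Function.Bijective pcat)
    (xobj : Fin m → X) (hxobj : Function.Bijective xobj)
    (α : Profile n X P → Classif X P)
    (hCS : CitizenSovereign α) (hInd : Independent α)
    (π : P → P)
    (hπ : ∀ (i : Fin ρ) (c : Profile n X P),
      (∀ j, (c j).1 (xobj (Fin.castLE hm.le i)) = pcat i) →
      (α c).1 (xobj (Fin.castLE hm.le i)) = π (pcat i)) :
    Function.Bijective π ∧
      ∀ (p : P) (x : X) (c : Profile n X P),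
        (∀ j, (c j).1 x = p) → (α c).1 x = π p := by
  classical
  have hPne : Nonempty P := by
    rw [← Fintype.card_pos_iff, hP]; omega
  -- Step 0: transversal constructor
  have hC : ∀ (p : P) (x y : X), x ≠ y →
      ∃ TP : P → X, Function.Injective TP ∧ TP p = x ∧
        ∀ q, q ≠ p → TP q ≠ x ∧ TP q ≠ y := by
    intro p x y hxy
    have hcardA : (Finset.univ \ {x, y} : Finset X).card = m - 2 := by
      rw [Finset.card_sdiff_of_subset (Finset.subset_univ _), Finset.card_univ, hX,
        Finset.card_pair hxy]
    have hcardP : Fintype.card {q : P // q ≠ p} = ρ - 1 := by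
      have h1 := Fintype.card_subtype_compl (fun q : P => q = p)
      rw [Fintype.card_subtype_eq, hP] at h1
      exact h1
    have hle : Fintype.card {q : P // q ≠ p} ≤ (Finset.univ \ {x, y} : Finset X).card := by
      rw [hcardP, hcardA]; omega
    obtain ⟨f, hf⟩ := Function.Embedding.exists_of_card_le_finset hle
    have hfmem : ∀ s : {q : P // q ≠ p}, f s ≠ x ∧ f s ≠ y := by
      intro s
      have h2 : (f s : X) ∈ Finset.univ \ ({x, y} : Finset X) := hf (Set.mem_range_self s)
      simp only [Finset.mem_sdiff, Finset.mem_insert, Finset.mem_singleton] at h2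
      exact ⟨fun h => h2.2 (Or.inl h), fun h => h2.2 (Or.inr h)⟩
    refine ⟨fun q => if h : q = p then x else f ⟨q, h⟩, ?_, by simp, ?_⟩
    · intro q q' hqq'
      dsimp only at hqq'
      by_cases h : q = p <;> by_cases h' : q' = p
      · rw [h, h']
      · rw [dif_pos h, dif_neg h'] at hqq'
        exact absurd hqq'.symm (hfmem ⟨q', h'⟩).1
      · rw [dif_neg h, dif_pos h'] at hqq'
        exact absurd hqq' (hfmem ⟨q, h⟩).1
      · rw [dif_neg h, dif_neg h'] at hqq'
        have := f.injective hqq'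
        exact Subtype.mk_eq_mk.mp this
    · intro q hq
      dsimp only
      rw [dif_neg hq]
      exact hfmem ⟨q, hq⟩
  -- Step 1: reference classifications
  have hR : ∀ (x : X) (p : P), ∃ c : Classif X P, c.1 x = p := by
    intro x p
    have hXnt : Nontrivial X := by
      apply Fintype.one_lt_card_iff_nontrivial.mp
      rw [hX]; omega
    obtain ⟨y, hy⟩ := exists_ne x
    obtain ⟨TP, hTPinj, hTPp, _⟩ := hC p x y (Ne.symm hy)
    refine ⟨⟨Function.extend TP id (fun _ => p), fun q => ⟨TP q, hTPinj.extend_apply _ _ _⟩⟩, ?_⟩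
    show Function.extend TP id (fun _ => p) x = p
    rw [← hTPp, hTPinj.extend_apply]
    rfl
  choose refc hrefc using hR
  set g : X → P → P := fun x p => (α (fun _ => refc x p)).1 x with hg
  -- Key lemma: for any injective transversal, p ↦ g (TP p) p is surjective
  have hKEY : ∀ TP : P → X, Function.Injective TP →
      Function.Surjective (fun p => g (TP p) p) := by
    intro TP hTP
    obtain ⟨p₀⟩ := hPne
    choose D hD using fun z => hCS z (g (TP p₀) p₀)
    set c : Profile n X P := fun j =>
      ⟨Function.extend TP id (fun z => (D z j).1 z),
        fun q => ⟨TP q, hTP.extend_apply _ _ _⟩⟩ with hcdef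
    have hval : ∀ q, (α c).1 (TP q) = g (TP q) q := by
      intro q
      apply hInd
      intro j
      show Function.extend TP id (fun z => (D z j).1 z) (TP q) = (refc (TP q) q).1 (TP q)
      rw [hTP.extend_apply, hrefc]
      rfl
    have hout : ∀ z, (¬∃ q, TP q = z) → (α c).1 z = g (TP p₀) p₀ := by
      intro z hz
      rw [← hD z]
      apply hInd
      intro j
      show Function.extend TP id (fun z' => (D z' j).1 z') z = (D z j).1 z
      rw [Function.extend_apply' _ _ _ hz]
    intro s
    obtain ⟨z, hzs⟩ := (α c).2 s
    by_cases hz : ∃ q, TP q = z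
    · obtain ⟨q, rfl⟩ := hz
      exact ⟨q, (hval q).symm.trans hzs⟩
    · exact ⟨p₀, (hout z hz).symm.trans hzs⟩
  have hKEYb : ∀ TP : P → X, Function.Injective TP →
      Function.Bijective (fun p => g (TP p) p) :=
    fun TP h => Finite.surjective_iff_bijective.mp (hKEY TP h)
  -- Step 2: g x p does not depend on x
  have hconst : ∀ (p : P) (x y : X), g x p = g y p := by
    have main : ∀ (p : P) (x y : X), x ≠ y → g x p = g y p := by
      intro p x y hxy
      obtain ⟨TP, hTPinj, hTPp, havoid⟩ := hC p x y hxy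
      set TP' := Function.update TP p y with hTP'def
      have hTP'p : TP' p = y := Function.update_self p y TP
      have hTP'inj : Function.Injective TP' := by
        intro q q' hqq'
        rcases eq_or_ne q p with rfl | h
        · rcases eq_or_ne q' q with rfl | h'
          · rfl
          · rw [hTP'def, Function.update_self, Function.update_of_ne h'] at hqq'
            exact absurd hqq'.symm (havoid q' h').2
        · rcases eq_or_ne q' p with rfl | h'
          · rw [hTP'def, Function.update_of_ne h, Function.update_self] at hqq'
            exact absurd hqq' (havoid q h).2
          · rw [hTP'def, Function.update_of_ne h, Function.update_of_ne h'] at hqq'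
            exact hTPinj hqq'
      have hF := hKEYb TP hTPinj
      have hF' := hKEYb TP' hTP'inj
      obtain ⟨q, hq⟩ := hF'.2 (g (TP p) p)
      rcases eq_or_ne q p with rfl | h
      · simp only at hq
        rw [hTPp] at hq
        rw [hTP'p] at hq
        exact hq.symm
      · exfalso
        have heq : g (TP' q) q = g (TP q) q := by
          rw [hTP'def, Function.update_of_ne h]
        simp only at hq
        rw [heq] at hq
        exact h (hF.1 hq)
    intro p x y
    rcases eq_or_ne x y with rfl | hxy
    · rfl
    · exact main p x y hxy
  -- Step 3: π equals g · p everywhere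
  have hπg : ∀ (p : P) (x : X), g x p = π p := by
    intro p x
    obtain ⟨i, rfl⟩ := hpcat.2 p
    have h1 := hπ i (fun _ => refc (xobj (Fin.castLE hm.le i)) (pcat i))
      (fun j => hrefc _ _)
    exact (hconst (pcat i) x (xobj (Fin.castLE hm.le i))).trans h1
  constructor
  · -- bijectivity of π
    set e := Equiv.ofBijective pcat hpcat with he
    have hTP₀ : Function.Injective (fun p : P => xobj (Fin.castLE hm.le (e.symm p))) := by
      intro a b hab
      have := hxobj.1 hab
      have := Fin.castLE_injective hm.le this
      exact e.symm.injective this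
    have := hKEYb _ hTP₀
    have heqf : (fun p : P => g (xobj (Fin.castLE hm.le (e.symm p))) p) = π := by
      funext p
      exact hπg p _
    rwa [heqf] at this
  · intro p x c hc
    have h1 : (α c).1 x = g x p := by
      apply hInd
      intro j
      rw [hc j, hrefc]
    rw [h1, hπg]
end

section
/- Let N = {1, 2, 3}, let X be a set of 3 objects, and let P be a set of 2 categories. Then there exists a classification aggregation function α : 𝒞^N → 𝒞 that is unanimous but is neither independent nor essentially a dictatorship (for instance, the plurality rule α_PLUR that selects the classification submitted by the largest number of individuals, breaking ties by a fixed linear order on 𝒞). -/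
/-- **Example 1.** With three individuals, three objects and two categories, there is a
CAF (e.g. the plurality rule with a fixed tie-breaking order) that is unanimous but
neither independent nor essentially a dictatorship. -/
theorem exists_unanimous_not_independent_not_essentiallyDictatorship
    (X P : Type) [Fintype X] [Fintype P]
    (hX : Fintype.card X = 3) (hP : Fintype.card P = 2) :
    ∃ α : Profile 3 X P → Classif X P,
      Unanimous α ∧ ¬ Independent α ∧ ¬ EssentiallyDictatorship α := by
  classical
  obtain ⟨e⟩ : Nonempty (X ≃ Fin 3) := ⟨Fintype.equivFinOfCardEq hX⟩
  obtain ⟨f⟩ : Nonempty (Fin 2 ≃ P) := ⟨(Fintype.equivFinOfCardEq hP).symm⟩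
  have mk : ∀ g : Fin 3 → Fin 2, Function.Surjective g →
      ∃ c : Classif X P, ∀ x, c.1 x = f (g (e x)) := by
    intro g hg
    exact ⟨⟨fun x => f (g (e x)),
      (f.surjective.comp hg).comp e.surjective⟩, fun x => rfl⟩
  obtain ⟨ca, hca⟩ := mk ![1, 0, 1] (by decide)
  obtain ⟨cb, hcb⟩ := mk ![0, 0, 1] (by decide)
  obtain ⟨cb', hcb'⟩ := mk ![0, 1, 0] (by decide)
  set x0 := e.symm 0 with hx0
  set x1 := e.symm 1 with hx1
  have ha0 : ca.1 x0 = f 1 := by rw [hca, hx0, e.apply_symm_apply]; rfl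
  have hb0 : cb.1 x0 = f 0 := by rw [hcb, hx0, e.apply_symm_apply]; rfl
  have hb'0 : cb'.1 x0 = f 0 := by rw [hcb', hx0, e.apply_symm_apply]; rfl
  have hb1 : cb.1 x1 = f 0 := by rw [hcb, hx1, e.apply_symm_apply]; rfl
  have hb'1 : cb'.1 x1 = f 1 := by rw [hcb', hx1, e.apply_symm_apply]; rfl
  have hf01 : (f 0 : P) ≠ f 1 := fun h => by simpa using f.injective h
  have hbb' : cb.1 ≠ cb'.1 := fun h => hf01 (by rw [← hb1, h, hb'1])
  refine ⟨fun c => if (c 1).1 = (c 2).1 then c 1 else c 0, ?_, ?_, ?_⟩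
  · intro c; simp
  · intro hind
    have h1 : (if cb.1 = cb'.1 then cb else ca).1 x0
        = (if cb'.1 = cb'.1 then cb' else ca).1 x0 :=
      hind x0 ![ca, cb, cb'] ![ca, cb', cb']
      (by
        intro i
        fin_cases i
        · rfl
        · show cb.1 x0 = cb'.1 x0
          rw [hb0, hb'0]
        · rfl)
    rw [if_neg hbb', if_pos rfl] at h1
    exact hf01 (by rw [← hb'0, ← h1, ha0])
  · rintro ⟨d, π, h⟩
    have h1 : (if cb.1 = cb.1 then cb else ca).1
        = ⇑π ∘ ((![ca, cb, cb] : Profile 3 X P) d).1 := h ![ca, cb, cb]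
    rw [if_pos rfl] at h1
    have h2 : (if cb.1 = cb'.1 then cb else ca).1
        = ⇑π ∘ ((![ca, cb, cb'] : Profile 3 X P) d).1 := h ![ca, cb, cb']
    rw [if_neg hbb'] at h2
    -- the d-th entries of the two profiles agree at x0
    have hq : ((![ca, cb, cb] : Profile 3 X P) d).1 x0
        = ((![ca, cb, cb'] : Profile 3 X P) d).1 x0 := by
      fin_cases d
      · rfl
      · rfl
      · show cb.1 x0 = cb'.1 x0
        rw [hb0, hb'0]
    have e1 : cb.1 x0 = π (((![ca, cb, cb] : Profile 3 X P) d).1 x0) := congrFun h1 x0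
    have e2 : ca.1 x0 = π (((![ca, cb, cb'] : Profile 3 X P) d).1 x0) := congrFun h2 x0
    rw [← hq] at e2
    rw [← e1, hb0, ha0] at e2
    exact hf01 e2.symm
end
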